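/- Let u₁, u₂ be two C² solutions of -u'' = xu - u^{p+1} on [0,∞) with u_i(0) = 0, 0 ≤ u_i(x) ≤ x^{1/p} for all x ≥ 0, u_i > 0 on (0,∞), u_i' > 0 on [0,∞), and u₁ ≤ u₂. Then the quotient u₂/u₁ is non-decreasing on (0,∞); consequently u₂(x)/u₁(x) ≥ u₂'(0)/u₁'(0) for all x > 0. -/

import Mathlib

/-!
The Wronskian `W = u₁ u₂' - u₁' u₂` satisfies `W' = u₁ u₂'' - u₁'' u₂ = u₁ u₂ (u₂^p - u₁^p) ≥ 0`
because `u₁ ≤ u₂`, and `W 0 = 0`, so `W ≥ 0` and `(u₂ / u₁)' = W / u₁² ≥ 0`. The value `u₂'(0) / u₁'(0)`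
is the limit of the quotient at `0⁺` (both functions vanish at `0` and `u₁'(0) ≠ 0`), hence a lower
bound for the non-decreasing quotient.
-/

open Filter Topology Set

noncomputable def wronskian (f g : ℝ → ℝ) (x : ℝ) : ℝ :=
  f x * deriv g x - deriv f x * g x

section Wronskian

variable {f g : ℝ → ℝ}

theorem hasDerivAt_wronskian {x : ℝ} (hf : DifferentiableAt ℝ f x) (hg : DifferentiableAt ℝ g x)
    (hf' : DifferentiableAt ℝ (deriv f) x) (hg' : DifferentiableAt ℝ (deriv g) x) :
    HasDerivAt (wronskian f g) (f x * deriv (deriv g) x - deriv (deriv f) x * g x) x := by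
  have h := (hf.hasDerivAt.mul hg'.hasDerivAt).sub (hf'.hasDerivAt.mul hg.hasDerivAt)
  exact h.congr_deriv (by ring)

theorem wronskian_nonneg_of_nonneg_deriv {a : ℝ} (hf : Differentiable ℝ f)
    (hg : Differentiable ℝ g) (hf' : Differentiable ℝ (deriv f)) (hg' : Differentiable ℝ (deriv g))
    (hfa : f a = 0) (hga : g a = 0)
    (hW' : ∀ x > a, deriv (deriv f) x * g x ≤ f x * deriv (deriv g) x) :
    ∀ x ≥ a, 0 ≤ wronskian f g x := by
  have hderiv x := hasDerivAt_wronskian (hf x) (hg x) (hf' x) (hg' x)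
  have hdiff : Differentiable ℝ (wronskian f g) := fun x => (hderiv x).differentiableAt
  have hmono : MonotoneOn (wronskian f g) (Ici a) := by
    refine monotoneOn_of_deriv_nonneg (convex_Ici a) hdiff.continuous.continuousOn
      hdiff.differentiableOn fun x hx => ?_
    rw [interior_Ici] at hx
    rw [(hderiv x).deriv]
    exact sub_nonneg.mpr (hW' x hx)
  intro x hx
  simpa [wronskian, hfa, hga] using hmono self_mem_Ici hx hx

theorem monotoneOn_div_of_wronskian_nonneg {s : Set ℝ} (hs : Convex ℝ s)
    (hf : Differentiable ℝ f) (hg : Differentiable ℝ g) (hpos : ∀ x ∈ s, 0 < f x)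
    (hW : ∀ x ∈ s, 0 ≤ wronskian f g x) :
    MonotoneOn (fun x => g x / f x) s := by
  have hquot x (hx : x ∈ s) :
      HasDerivAt (fun x => g x / f x) (wronskian f g x / f x ^ 2) x := by
    refine ((hg x).hasDerivAt.div (hf x).hasDerivAt (hpos x hx).ne').congr_deriv ?_
    rw [wronskian]
    ring
  refine monotoneOn_of_deriv_nonneg hs
    (hg.continuous.continuousOn.div hf.continuous.continuousOn fun x hx => (hpos x hx).ne')
    (fun x hx => (hquot x (interior_subset hx)).differentiableAt.differentiableWithinAt)
    fun x hx => ?_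
  rw [(hquot x (interior_subset hx)).deriv]
  exact div_nonneg (hW x (interior_subset hx)) (sq_nonneg _)

end Wronskian

theorem tendsto_div_of_eq_zero_of_hasDerivAt {f g : ℝ → ℝ} {f' g' a : ℝ}
    (hf : HasDerivAt f f' a) (hg : HasDerivAt g g' a) (hfa : f a = 0) (hga : g a = 0)
    (hf' : f' ≠ 0) :
    Tendsto (fun x => g x / f x) (𝓝[≠] a) (𝓝 (g' / f')) := by
  refine ((hasDerivAt_iff_tendsto_slope.mp hg).div (hasDerivAt_iff_tendsto_slope.mp hf) hf').congr' ?_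
  filter_upwards [self_mem_nhdsWithin] with x hx
  have hxa : x - a ≠ 0 := sub_ne_zero.mpr hx
  simp only [Pi.div_apply, slope_def_field, hfa, hga, sub_zero]
  field_simp

theorem MonotoneOn.le_of_tendsto_nhdsGT {q : ℝ → ℝ} {a L : ℝ} (hq : MonotoneOn q (Ioi a))
    (hlim : Tendsto q (𝓝[>] a) (𝓝 L)) {x : ℝ} (hx : a < x) : L ≤ q x := by
  refine le_of_tendsto hlim ?_
  filter_upwards [Ioo_mem_nhdsGT hx] with y hy
  exact hq hy.1 hx hy.2.le

theorem rpow_add_one_mul_le_mul_rpow_add_one {p a b : ℝ} (hp : 0 ≤ p) (ha : 0 ≤ a) (hab : a ≤ b) :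
    a ^ (p + 1) * b ≤ a * b ^ (p + 1) := by
  have hb : 0 ≤ b := ha.trans hab
  have hp1 : p + 1 ≠ 0 := by linarith
  rw [Real.rpow_add_one' ha hp1, Real.rpow_add_one' hb hp1]
  have := Real.rpow_le_rpow ha hab hp
  nlinarith [mul_nonneg ha hb]

theorem stmt5_general (p : ℝ) (hp : 1 < p) (u₁ u₂ : ℝ → ℝ)
    (h1 : ContDiff ℝ 2 u₁) (h2 : ContDiff ℝ 2 u₂)
    (heq1 : ∀ x ≥ (0:ℝ), -(deriv (deriv u₁) x) = x * u₁ x - u₁ x ^ (p + 1))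
    (heq2 : ∀ x ≥ (0:ℝ), -(deriv (deriv u₂) x) = x * u₂ x - u₂ x ^ (p + 1))
    (h10 : u₁ 0 = 0) (h20 : u₂ 0 = 0)
    (hpos1 : ∀ x > (0:ℝ), 0 < u₁ x)
    (hd1 : ∀ x ≥ (0:ℝ), 0 < deriv u₁ x)
    (hle : ∀ x ≥ (0:ℝ), u₁ x ≤ u₂ x) :
    MonotoneOn (fun x => u₂ x / u₁ x) (Set.Ioi 0) ∧
    ∀ x > (0:ℝ), deriv u₂ 0 / deriv u₁ 0 ≤ u₂ x / u₁ x := by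
  have hdiff1 := h1.differentiable two_ne_zero
  have hdiff2 := h2.differentiable two_ne_zero
  have hW := wronskian_nonneg_of_nonneg_deriv hdiff1 hdiff2 h1.differentiable_deriv_two
    h2.differentiable_deriv_two h10 h20 fun x hx => by
      rw [neg_eq_iff_eq_neg.mp (heq1 x hx.le), neg_eq_iff_eq_neg.mp (heq2 x hx.le)]
      have := rpow_add_one_mul_le_mul_rpow_add_one (p := p) (by linarith) (hpos1 x hx).le
        (hle x hx.le)
      linarith
  have hmono := monotoneOn_div_of_wronskian_nonneg (convex_Ioi 0) hdiff1 hdiff2 hpos1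
    fun x hx => hW x (le_of_lt hx)
  have hlim := tendsto_div_of_eq_zero_of_hasDerivAt (hdiff1 0).hasDerivAt (hdiff2 0).hasDerivAt
    h10 h20 (hd1 0 le_rfl).ne'
  exact ⟨hmono, fun x hx => hmono.le_of_tendsto_nhdsGT (hlim.mono_left (nhdsGT_le_nhdsNE 0)) hx⟩

/-- Monotonicity of the quotient of two ordered solutions of `-u'' = xu - u^{p+1}`
vanishing at the origin. -/
theorem stmt5 (p : ℝ) (hp : 1 < p) (u₁ u₂ : ℝ → ℝ)
    (h1 : ContDiff ℝ 2 u₁) (h2 : ContDiff ℝ 2 u₂)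
    (heq1 : ∀ x ≥ (0:ℝ), -(deriv (deriv u₁) x) = x * u₁ x - u₁ x ^ (p + 1))
    (heq2 : ∀ x ≥ (0:ℝ), -(deriv (deriv u₂) x) = x * u₂ x - u₂ x ^ (p + 1))
    (h10 : u₁ 0 = 0) (h20 : u₂ 0 = 0)
    (hb1 : ∀ x ≥ (0:ℝ), 0 ≤ u₁ x ∧ u₁ x ≤ x ^ (1 / p))
    (hb2 : ∀ x ≥ (0:ℝ), 0 ≤ u₂ x ∧ u₂ x ≤ x ^ (1 / p))
    (hpos1 : ∀ x > (0:ℝ), 0 < u₁ x) (hpos2 : ∀ x > (0:ℝ), 0 < u₂ x)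
    (hd1 : ∀ x ≥ (0:ℝ), 0 < deriv u₁ x) (hd2 : ∀ x ≥ (0:ℝ), 0 < deriv u₂ x)
    (hle : ∀ x ≥ (0:ℝ), u₁ x ≤ u₂ x) :
    MonotoneOn (fun x => u₂ x / u₁ x) (Set.Ioi 0) ∧
    ∀ x > (0:ℝ), deriv u₂ 0 / deriv u₁ 0 ≤ u₂ x / u₁ x :=
  stmt5_general p hp u₁ u₂ h1 h2 heq1 heq2 h10 h20 hpos1 hd1 hle
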